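/- Let p be an odd prime, let n, k, l be positive integers with l | k and k/l odd, and set d = gcd(n,k), L = lcm(d,l). Suppose n/d is even and p divides k/L. Let a ∈ 𝔽_{p^n}. Then the equation S_l^k(X) = a has a solution in 𝔽_{p^n} if and only if S_d^n(a) = 0. Moreover, in that case, for any δ ∈ 𝔽_{p^n} with T_d^n(δ) = 1, the element x₀ = T_l^{2l}( Σ_{i=0}^{n/d−2} Σ_{j=i+1}^{n/d−1} (−1)^i δ^{p^{kj}} a^{p^{ki}} ) lies in 𝔽_{p^n} and satisfies S_l^k(x₀) = a. -/

import Mathlib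

/-!
Write `σ x = x ^ p ^ k`. Since `k / l` is odd, `S_l^k` telescopes: `S y + (S y) ^ p ^ l = y + σ y`,
so `S_l^k (T_l^{2l} y) = y + σ y`. On `𝔽_{p^n}`, with `m = n / d` even and `k / d` prime to `m`,
`S_d^n` and `T_d^n` are the alternating and the plain sum of `σ^i` over `i < m`.

Necessity: `S_d^n` commutes with `S_l^k`, and `w = S_d^n x` satisfies `w ^ p ^ d = -w`, hence
`w ^ p ^ L = -w`. The terms of `S_l^k w` are then periodic with odd period `L / l`, so `S_l^k w`
is `k / L` times a sum, which vanishes as `p ∣ k / L`.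

Sufficiency: the double sum `y` solves `y + σ y = a`, an identity that holds for any ring
endomorphism `σ` once `Σ σ^j δ = 1`, `σ^m δ = δ` and `Σ (-1)^i σ^i a = 0`. A suitable `δ` exists
because `T_d^n` is a polynomial of degree `< p ^ n`, hence nonzero somewhere on `𝔽_{p^n}`, and its
values lie in `𝔽_{p^d}`, where they can be divided out.
-/

open Finset

/-- `Tmap p u v x = Σ_{i=0}^{v/u - 1} x^{p^{u i}}` on the algebraic closure of `𝔽_p`. -/
noncomputable def Tmap (p : ℕ) [Fact p.Prime] (u v : ℕ) (x : AlgebraicClosure (ZMod p)) :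
    AlgebraicClosure (ZMod p) :=
  ∑ i ∈ Finset.range (v / u), x ^ p ^ (u * i)

/-- `Smap p u v x = Σ_{i=0}^{v/u - 1} (-1)^i x^{p^{u i}}` on the algebraic closure of `𝔽_p`. -/
noncomputable def Smap (p : ℕ) [Fact p.Prime] (u v : ℕ) (x : AlgebraicClosure (ZMod p)) :
    AlgebraicClosure (ZMod p) :=
  ∑ i ∈ Finset.range (v / u), (-1 : AlgebraicClosure (ZMod p)) ^ i * x ^ p ^ (u * i)

/-- `Ffield p m` is the subfield `𝔽_{p^m} = {x : x^{p^m} = x}` of the algebraic closure of `𝔽_p`. -/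
def Ffield (p : ℕ) [Fact p.Prime] (m : ℕ) : Set (AlgebraicClosure (ZMod p)) :=
  {x | x ^ p ^ m = x}

namespace Function.Periodic

variable {M : Type*} [AddCommMonoid M] {g : ℕ → M} {N : ℕ}

theorem sum_range_mul (hg : Periodic g N) (c : ℕ) :
    ∑ t ∈ range (N * c), g t = c • ∑ t ∈ range N, g t := by
  induction c with
  | zero => simp
  | succ c ih =>
    rw [Nat.mul_succ, sum_range_add, ih, succ_nsmul]
    congr 1
    refine sum_congr rfl fun t _ ↦ ?_
    rw [add_comm, mul_comm, ← smul_eq_mul, hg.nsmul]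

theorem sum_range_comp_mul (hg : Periodic g N) {c : ℕ} (hc : c.Coprime N) :
    ∑ i ∈ range N, g (c * i) = ∑ i ∈ range N, g i := by
  rcases N.eq_zero_or_pos with rfl | hN
  · simp
  have hmaps : Set.MapsTo (fun i ↦ c * i % N) (range N : Set ℕ) (range N) :=
    fun i _ ↦ mem_range.2 (Nat.mod_lt _ hN)
  have hinj : Set.InjOn (fun i ↦ c * i % N) (range N : Set ℕ) := fun i hi j hj hij ↦
    Nat.ModEq.eq_of_lt_of_lt (Nat.ModEq.cancel_left_of_coprime (Nat.coprime_comm.1 hc) hij)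
      (mem_range.1 hi) (mem_range.1 hj)
  calc ∑ i ∈ range N, g (c * i) = ∑ i ∈ range N, g (c * i % N) := by simp only [hg.map_mod_nat]
    _ = ∑ i ∈ range N, g i :=
      sum_nbij _ hmaps hinj (surjOn_of_injOn_of_card_le _ hmaps hinj le_rfl) fun _ _ ↦ rfl

end Function.Periodic

theorem pow_pow_mul_eq_self {M : Type*} [Monoid M] {z : M} {q n : ℕ} (hz : z ^ q ^ n = z)
    (j : ℕ) : z ^ q ^ (n * j) = z := by
  induction j with
  | zero => simp
  | succ j ih => rw [Nat.mul_succ, pow_add, pow_mul, ih, hz]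

theorem sum_range_pow_mul_pow_pow_mul_of_coprime {R : Type*} [CommRing R] {ε z : R} {q d m c : ℕ}
    (hε : ε ^ 2 = 1) (hm : Even m) (hz : z ^ q ^ (d * m) = z) (hc : c.Coprime m) :
    ∑ i ∈ range m, ε ^ i * z ^ q ^ (d * c * i) = ∑ i ∈ range m, ε ^ i * z ^ q ^ (d * i) := by
  have hεm : ε ^ m = 1 := by
    obtain ⟨r, rfl⟩ := hm
    rw [← two_mul, pow_mul, hε, one_pow]
  have hperiodic : Function.Periodic (fun i ↦ ε ^ i * z ^ q ^ (d * i)) m := fun i ↦ by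
    simp only
    rw [pow_add, hεm, mul_one, mul_add, pow_add, mul_comm (q ^ (d * i)), pow_mul, hz]
  obtain ⟨r, rfl⟩ := Nat.Coprime.odd_of_right (hc.coprime_dvd_right hm.two_dvd)
  rw [← hperiodic.sum_range_comp_mul hc]
  refine sum_congr rfl fun i _ ↦ ?_
  rw [mul_assoc d, add_mul, one_mul, pow_add ε, mul_assoc 2, pow_mul ε 2, hε, one_pow, one_mul]

section Frobenius

variable {R : Type*} [CommRing R] {p : ℕ} [ExpChar R p]

theorem pow_expChar_pow_mul_eq_neg_one_pow_mul {w : R} {d : ℕ} (hw : w ^ p ^ d = -w) (j : ℕ) :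
    w ^ p ^ (d * j) = (-1) ^ j * w := by
  induction j with
  | zero => simp
  | succ j ih =>
    rw [Nat.mul_succ, pow_add, pow_mul, ih, mul_pow, hw, ← pow_mul, mul_comm j, pow_mul,
      neg_one_pow_expChar_pow, pow_succ]
    ring

variable (p) in
theorem neg_one_pow_mul_pow_expChar_pow (i s : ℕ) (z : R) :
    ((-1) ^ i * z) ^ p ^ s = (-1) ^ i * z ^ p ^ s := by
  rw [mul_pow, ← pow_mul, mul_comm i, pow_mul, neg_one_pow_expChar_pow]

end Frobenius

theorem add_map_sum_range_sum_Ico {R : Type*} [CommRing R] (σ : R →+* R) {A D : ℕ → R} {m : ℕ}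
    (hA : ∀ i, σ (A i) = A (i + 1)) (hD : ∀ j, σ (D j) = D (j + 1)) (hDm : D m = D 0)
    (hDsum : ∑ j ∈ range m, D j = 1) (hAsum : ∑ i ∈ range m, (-1) ^ i * A i = 0) :
    (∑ i ∈ range (m - 1), ∑ j ∈ Ico (i + 1) m, (-1) ^ i * D j * A i) +
      σ (∑ i ∈ range (m - 1), ∑ j ∈ Ico (i + 1) m, (-1) ^ i * D j * A i) = A 0 := by
  rcases m with _ | m
  · exact (subsingleton_of_zero_eq_one (by simpa using hDsum)).elim _ _
  -- With `tail i = ∑_{i ≤ j ≤ m} D j`, `σ y` is minus the shifted summands of `y` plus a `D 0`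
  -- term, so `y + σ y` telescopes.
  set tail : ℕ → R := fun i ↦ ∑ j ∈ Ico i (m + 1), D j with htail
  set h : ℕ → R := fun i ↦ (-1) ^ i * A i * tail (i + 1) with hh
  have hY : ∑ i ∈ range m, ∑ j ∈ Ico (i + 1) (m + 1), (-1) ^ i * D j * A i =
      ∑ i ∈ range m, h i := by
    refine sum_congr rfl fun i _ ↦ ?_
    simp only [hh, htail, mul_sum]
    exact sum_congr rfl fun j _ ↦ by ring
  have hσtail (i : ℕ) (hi : i < m) : σ (tail (i + 1)) = tail (i + 2) + D 0 := by
    rw [htail, map_sum, ← hDm, ← sum_Ico_succ_top (by omega)]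
    simp only [hD, sum_Ico_add']
  have hσY : σ (∑ i ∈ range m, h i) =
      ∑ i ∈ range m, (-h (i + 1) - (-1) ^ (i + 1) * A (i + 1) * D 0) := by
    rw [map_sum]
    refine sum_congr rfl fun i hi ↦ ?_
    simp only [hh, map_mul, map_pow, map_neg, map_one, hA, hσtail i (mem_range.1 hi)]
    ring
  have hA0 : ∑ i ∈ range m, (-1) ^ (i + 1) * A (i + 1) = -A 0 := by
    rw [sum_range_succ'] at hAsum
    simpa [eq_neg_iff_add_eq_zero] using hAsum
  have hh0 : h 0 = A 0 * (1 - D 0) := by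
    rw [← hDsum, range_eq_Ico, sum_eq_sum_Ico_succ_bot (Nat.succ_pos m)]
    simp [hh, htail]
  have hhm : h m = 0 := by simp [hh, htail]
  simp only [Nat.add_sub_cancel]
  rw [hY, hσY, sum_sub_distrib, sum_neg_distrib, ← sum_mul, hA0]
  have htel := sum_range_sub' h m
  rw [sum_sub_distrib, hh0, hhm] at htel
  linear_combination htel

section AlgebraicClosure

variable {p : ℕ} [Fact p.Prime]

local notation "𝔽" => AlgebraicClosure (ZMod p)

theorem Ffield_eq_eqLocusField (n : ℕ) :
    Ffield p n = ((iterateFrobenius 𝔽 p n).eqLocusField (RingHom.id 𝔽) : Set 𝔽) :=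
  rfl

theorem Smap_add (u v : ℕ) (x y : 𝔽) : Smap p u v (x + y) = Smap p u v x + Smap p u v y := by
  simp only [Smap, add_pow_char_pow, mul_add, sum_add_distrib]

theorem Smap_pow_pow (u v s : ℕ) (x : 𝔽) : Smap p u v (x ^ p ^ s) = Smap p u v x ^ p ^ s := by
  simp only [Smap, sum_pow_char_pow, neg_one_pow_mul_pow_expChar_pow, ← pow_mul, ← pow_add,
    add_comm s]

theorem Smap_comm (u v u' v' : ℕ) (x : 𝔽) :
    Smap p u v (Smap p u' v' x) = Smap p u' v' (Smap p u v x) := by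
  simp only [Smap, sum_pow_char_pow, neg_one_pow_mul_pow_expChar_pow, mul_sum, ← pow_mul,
    ← pow_add]
  rw [sum_comm]
  exact sum_congr rfl fun i _ ↦ sum_congr rfl fun j _ ↦ by rw [add_comm (u * j)]; ring

theorem Smap_add_pow_pow_self (u v : ℕ) (x : 𝔽) :
    Smap p u v x + Smap p u v x ^ p ^ u = x - (-1) ^ (v / u) * x ^ p ^ (u * (v / u)) := by
  have h := sum_range_succ' (fun i ↦ (-1 : 𝔽) ^ i * x ^ p ^ (u * i)) (v / u)
  rw [sum_range_succ] at h
  simp only [Smap, sum_pow_char_pow, neg_one_pow_mul_pow_expChar_pow, ← pow_mul, ← pow_add]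
  simp only [pow_succ, mul_add, mul_one, mul_zero, pow_zero, one_mul, mul_neg, neg_mul,
    sum_neg_distrib] at h
  linear_combination h

theorem Tmap_pow_pow_self (u v : ℕ) (x : 𝔽) :
    Tmap p u v x ^ p ^ u = Tmap p u v x - x + x ^ p ^ (u * (v / u)) := by
  have h := sum_range_succ' (fun i ↦ x ^ p ^ (u * i)) (v / u)
  rw [sum_range_succ] at h
  simp only [Tmap, sum_pow_char_pow, ← pow_mul, ← pow_add]
  simp only [mul_add, mul_one, mul_zero, pow_zero] at h
  linear_combination -h

theorem Smap_add_pow_pow_of_odd {l k : ℕ} (hlk : l ∣ k) (hkl : Odd (k / l)) (x : 𝔽) :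
    Smap p l k x + Smap p l k x ^ p ^ l = x + x ^ p ^ k := by
  rw [Smap_add_pow_pow_self, Nat.mul_div_cancel' hlk, hkl.neg_one_pow]
  ring

theorem Smap_pow_pow_eq_neg {d n : ℕ} (hdn : d ∣ n) (hnd : Even (n / d)) {x : 𝔽}
    (hx : x ∈ Ffield p n) : Smap p d n x ^ p ^ d = -Smap p d n x := by
  refine eq_neg_of_add_eq_zero_right ?_
  rw [Smap_add_pow_pow_self, Nat.mul_div_cancel' hdn, hnd.neg_one_pow, one_mul, hx, sub_self]

theorem Smap_eq_zero_of_pow_pow_eq_neg {l L k : ℕ} {w : 𝔽} (hw : w ^ p ^ L = -w) (hlL : l ∣ L)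
    (hLk : L ∣ k) (hLl : Odd (L / l)) (hpk : p ∣ k / L) : Smap p l k w = 0 := by
  obtain ⟨N, rfl⟩ := hlL
  obtain ⟨M, rfl⟩ := hLk
  have hl : 0 < l := Nat.pos_of_ne_zero (by rintro rfl; simp at hLl)
  rw [Nat.mul_div_cancel_left _ hl] at hLl
  rw [Nat.mul_div_cancel_left _ (Nat.mul_pos hl hLl.pos)] at hpk
  have hperiodic : Function.Periodic (fun t ↦ (-1 : 𝔽) ^ t * w ^ p ^ (l * t)) N := fun t ↦ by
    simp only
    rw [pow_add, hLl.neg_one_pow, mul_add, pow_add, mul_comm (p ^ (l * t)), pow_mul, hw, neg_pow w,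
      neg_one_pow_char_pow]
    ring
  rw [Smap, mul_assoc, Nat.mul_div_cancel_left _ hl, hperiodic.sum_range_mul, nsmul_eq_mul,
    (CharP.cast_eq_zero_iff 𝔽 p M).2 hpk, zero_mul]

theorem Smap_Tmap_two_mul {l k : ℕ} (hlk : l ∣ k) (hkl : Odd (k / l)) (y : 𝔽) :
    Smap p l k (Tmap p l (2 * l) y) = y + y ^ p ^ k := by
  have hl : 0 < l := Nat.pos_of_ne_zero (by rintro rfl; simp at hkl)
  have hT : Tmap p l (2 * l) y = y + y ^ p ^ l := by
    simp [Tmap, Nat.mul_div_cancel _ hl, sum_range_succ]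
  rw [hT, Smap_add, Smap_pow_pow, Smap_add_pow_pow_of_odd hlk hkl]

theorem Smap_eq_sum_range_of_coprime {d m c : ℕ} (hd : 0 < d) (hm : Even m) (hc : c.Coprime m)
    {x : 𝔽} (hx : x ∈ Ffield p (d * m)) :
    Smap p d (d * m) x = ∑ i ∈ range m, (-1) ^ i * x ^ p ^ (d * c * i) := by
  rw [Smap, Nat.mul_div_cancel_left _ hd,
    sum_range_pow_mul_pow_pow_mul_of_coprime (by norm_num) hm hx hc]

theorem Tmap_eq_sum_range_of_coprime {d m c : ℕ} (hd : 0 < d) (hm : Even m) (hc : c.Coprime m)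
    {x : 𝔽} (hx : x ∈ Ffield p (d * m)) :
    Tmap p d (d * m) x = ∑ i ∈ range m, x ^ p ^ (d * c * i) := by
  rw [Tmap, Nat.mul_div_cancel_left _ hd]
  simpa using (sum_range_pow_mul_pow_pow_mul_of_coprime (one_pow 2) hm hx hc).symm

theorem Tmap_mem_Ffield (u v : ℕ) {n : ℕ} {x : 𝔽} (hx : x ∈ Ffield p n) :
    Tmap p u v x ∈ Ffield p n := by
  rw [Ffield_eq_eqLocusField] at *
  exact sum_mem fun i _ ↦ pow_mem hx _

theorem Tmap_mul_of_pow_pow_eq_self (d n : ℕ) {c : 𝔽} (hc : c ^ p ^ d = c) (x : 𝔽) :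
    Tmap p d n (c * x) = c * Tmap p d n x := by
  rw [Tmap, Tmap, mul_sum]
  exact sum_congr rfl fun i _ ↦ by rw [mul_pow, pow_pow_mul_eq_self hc]

open Polynomial in
theorem exists_mem_Ffield_eval_ne_zero {n : ℕ} (hn : 0 < n) {Q : 𝔽[X]} (hQ : Q ≠ 0)
    (hdeg : Q.natDegree < p ^ n) : ∃ x ∈ Ffield p n, Q.eval x ≠ 0 := by
  classical
  have hp := (Fact.out : p.Prime)
  set P : (ZMod p)[X] := X ^ p ^ n - X
  have hcard : Fintype.card (P.rootSet 𝔽) = p ^ n := by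
    rw [card_rootSet_eq_natDegree (galois_poly_separable p _ (dvd_pow_self p hn.ne'))
      (IsAlgClosed.splits _), FiniteField.X_pow_card_pow_sub_X_natDegree_eq _ hn.ne' hp.one_lt]
  by_contra! h
  refine hQ (eq_zero_of_natDegree_lt_card_of_eval_eq_zero Q Subtype.val_injective
    (fun x ↦ h x ?_) (hcard ▸ hdeg))
  change (x : 𝔽) ^ p ^ n = x
  simpa [P, sub_eq_zero] using (mem_rootSet.1 x.2).2

variable (p) in
open Polynomial in
theorem exists_Tmap_ne_zero {d n : ℕ} (hn : 0 < n) (hdn : d ∣ n) :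
    ∃ x ∈ Ffield p n, Tmap p d n x ≠ 0 := by
  obtain ⟨m, rfl⟩ := hdn
  have hd : 0 < d := Nat.pos_of_ne_zero (by rintro rfl; simp at hn)
  have hm : 0 < m := Nat.pos_of_ne_zero (by rintro rfl; simp at hn)
  have hp := (Fact.out : p.Prime)
  set Q : 𝔽[X] := ∑ i ∈ range m, X ^ p ^ (d * i) with hQ
  have hQ0 : Q ≠ 0 := fun h0 ↦ by
    have h1 := congrArg (coeff · 1) h0
    simp [hQ, finsetSum_coeff, coeff_X_pow, @eq_comm _ 1, hp.ne_one, hd.ne', hm] at h1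
  have hdeg : Q.natDegree < p ^ (d * m) := by
    refine (natDegree_sum_le_of_forall_le _ _ fun i hi ↦ (natDegree_X_pow _).trans_le
      (Nat.pow_le_pow_right hp.pos (Nat.mul_le_mul_left d (Nat.le_sub_one_of_lt (mem_range.1 hi)))))
      |>.trans_lt (Nat.pow_lt_pow_right hp.one_lt (Nat.mul_lt_mul_of_pos_left (by omega) hd))
  obtain ⟨x, hx, hQx⟩ := exists_mem_Ffield_eval_ne_zero hn hQ0 hdeg
  refine ⟨x, hx, ?_⟩
  simpa [hQ, eval_finsetSum, Tmap, Nat.mul_div_cancel_left _ hd] using hQx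

variable (p) in
theorem exists_Tmap_eq_one {d n : ℕ} (hn : 0 < n) (hdn : d ∣ n) :
    ∃ δ ∈ Ffield p n, Tmap p d n δ = 1 := by
  obtain ⟨x, hx, hTx⟩ := exists_Tmap_ne_zero p hn hdn
  have hT : Tmap p d n x ^ p ^ d = Tmap p d n x := by
    rw [Tmap_pow_pow_self, Nat.mul_div_cancel' hdn, hx, sub_add_cancel]
  refine ⟨(Tmap p d n x)⁻¹ * x, ?_, ?_⟩
  · have hTmem := Tmap_mem_Ffield d n hx
    rw [Ffield_eq_eqLocusField] at *
    exact mul_mem (inv_mem hTmem) hx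
  · rw [Tmap_mul_of_pow_pow_eq_self d n (by rw [inv_pow, hT]), inv_mul_cancel₀ hTx]

variable (p) in
noncomputable def alternatingPairSum (k m : ℕ) (δ a : 𝔽) : 𝔽 :=
  ∑ i ∈ range (m - 1), ∑ j ∈ Ico (i + 1) m, (-1) ^ i * δ ^ p ^ (k * j) * a ^ p ^ (k * i)

theorem alternatingPairSum_mem_Ffield (k m : ℕ) {n : ℕ} {a δ : 𝔽} (ha : a ∈ Ffield p n)
    (hδ : δ ∈ Ffield p n) : alternatingPairSum p k m δ a ∈ Ffield p n := by
  rw [Ffield_eq_eqLocusField] at *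
  exact sum_mem fun i _ ↦ sum_mem fun j _ ↦
    mul_mem (mul_mem (pow_mem (neg_mem (one_mem _)) _) (pow_mem hδ _)) (pow_mem ha _)

theorem alternatingPairSum_add_pow_pow {d n k : ℕ} (hdk : d ∣ k) (hdn : d ∣ n)
    (hc : (k / d).Coprime (n / d)) (hm : Even (n / d)) {a δ : 𝔽} (ha : a ∈ Ffield p n)
    (hδ : δ ∈ Ffield p n) (ha0 : Smap p d n a = 0) (hδ1 : Tmap p d n δ = 1) :
    alternatingPairSum p k (n / d) δ a + alternatingPairSum p k (n / d) δ a ^ p ^ k = a := by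
  obtain ⟨c, rfl⟩ := hdk
  obtain ⟨m, rfl⟩ := hdn
  have hd : 0 < d := Nat.pos_of_ne_zero (by rintro rfl; simp at hc)
  simp only [Nat.mul_div_cancel_left _ hd] at hc hm ⊢
  have hfrob (x : 𝔽) (i : ℕ) :
      iterateFrobenius 𝔽 p (d * c) (x ^ p ^ (d * c * i)) = x ^ p ^ (d * c * (i + 1)) := by
    rw [iterateFrobenius_def, ← pow_mul, ← pow_add, mul_add, mul_one]
  simpa only [alternatingPairSum, iterateFrobenius_def, mul_zero, pow_zero, pow_one] using
    add_map_sum_range_sum_Ico (iterateFrobenius 𝔽 p (d * c)) (hfrob a) (hfrob δ)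
    (by rw [mul_right_comm, pow_pow_mul_eq_self hδ, mul_zero, pow_zero, pow_one])
    ((Tmap_eq_sum_range_of_coprime hd hm hc hδ).symm.trans hδ1)
    ((Smap_eq_sum_range_of_coprime hd hm hc ha).symm.trans ha0)

theorem Smap_Smap_eq_zero {d n l k L : ℕ} (hdn : d ∣ n) (hnd : Even (n / d)) (hdL : d ∣ L)
    (hLd : Odd (L / d)) (hlL : l ∣ L) (hLk : L ∣ k) (hLl : Odd (L / l)) (hpk : p ∣ k / L) {x : 𝔽}
    (hx : x ∈ Ffield p n) : Smap p d n (Smap p l k x) = 0 := by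
  rw [Smap_comm]
  refine Smap_eq_zero_of_pow_pow_eq_neg ?_ hlL hLk hLl hpk
  rw [← Nat.mul_div_cancel' hdL, pow_expChar_pow_mul_eq_neg_one_pow_mul
    (Smap_pow_pow_eq_neg hdn hnd hx), hLd.neg_one_pow, neg_one_mul]

end AlgebraicClosure

theorem stmt17_general (p : ℕ) [Fact p.Prime] (n k l : ℕ)
    (hn : 0 < n)
    (hlk : l ∣ k) (hkl : Odd (k / l)) (d L : ℕ)
    (hd : d = Nat.gcd n k) (hL : L = Nat.lcm d l)
    (hnd : Even (n / d)) (hpk : p ∣ k / L)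
    (a : AlgebraicClosure (ZMod p)) (ha : a ∈ Ffield p n) :
    ((∃ x ∈ Ffield p n, Smap p l k x = a) ↔ Smap p d n a = 0) ∧
    (Smap p d n a = 0 → ∀ δ ∈ Ffield p n, Tmap p d n δ = 1 →
      ∀ x₀, x₀ = Tmap p l (2 * l) (∑ i ∈ Finset.range (n / d - 1),
          ∑ j ∈ Finset.Ico (i + 1) (n / d),
          (-1 : AlgebraicClosure (ZMod p)) ^ i * δ ^ p ^ (k * j) * a ^ p ^ (k * i)) →
        x₀ ∈ Ffield p n ∧ Smap p l k x₀ = a) := by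
  have hdn : d ∣ n := hd ▸ Nat.gcd_dvd_left n k
  have hdk : d ∣ k := hd ▸ Nat.gcd_dvd_right n k
  have hlL : l ∣ L := hL ▸ Nat.dvd_lcm_right d l
  have hdL : d ∣ L := hL ▸ Nat.dvd_lcm_left d l
  have hLk : L ∣ k := hL ▸ Nat.lcm_dvd hdk hlk
  have hcop : (k / d).Coprime (n / d) :=
    (hd ▸ Nat.coprime_div_gcd_div_gcd (Nat.gcd_pos_of_pos_left k hn)).symm
  have hkd : Odd (k / d) := Nat.Coprime.odd_of_right (hcop.coprime_dvd_right hnd.two_dvd)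
  have suff : Smap p d n a = 0 → ∀ δ ∈ Ffield p n, Tmap p d n δ = 1 →
      ∀ x₀, x₀ = Tmap p l (2 * l) (alternatingPairSum p k (n / d) δ a) →
        x₀ ∈ Ffield p n ∧ Smap p l k x₀ = a := by
    rintro ha0 δ hδ hδ1 x₀ rfl
    refine ⟨Tmap_mem_Ffield _ _ (alternatingPairSum_mem_Ffield _ _ ha hδ), ?_⟩
    rw [Smap_Tmap_two_mul hlk hkl, alternatingPairSum_add_pow_pow hdk hdn hcop hnd ha hδ ha0 hδ1]
  refine ⟨⟨?_, fun ha0 ↦ ?_⟩, suff⟩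
  · rintro ⟨x, hx, rfl⟩
    exact Smap_Smap_eq_zero hdn hnd hdL (hkd.of_dvd_nat (Nat.div_dvd_div hdL hLk)) hlL hLk
      (hkl.of_dvd_nat (Nat.div_dvd_div hlL hLk)) hpk hx
  · obtain ⟨δ, hδ, hδ1⟩ := exists_Tmap_eq_one p hn hdn
    exact ⟨_, suff ha0 δ hδ hδ1 _ rfl⟩

theorem stmt17 (p : ℕ) [Fact p.Prime] (hp2 : p ≠ 2) (n k l : ℕ)
    (hn : 0 < n) (hk : 0 < k) (hl : 0 < l)
    (hlk : l ∣ k) (hkl : Odd (k / l)) (d L : ℕ)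
    (hd : d = Nat.gcd n k) (hL : L = Nat.lcm d l)
    (hnd : Even (n / d)) (hpk : p ∣ k / L)
    (a : AlgebraicClosure (ZMod p)) (ha : a ∈ Ffield p n) :
    ((∃ x ∈ Ffield p n, Smap p l k x = a) ↔ Smap p d n a = 0) ∧
    (Smap p d n a = 0 → ∀ δ ∈ Ffield p n, Tmap p d n δ = 1 →
      ∀ x₀, x₀ = Tmap p l (2 * l) (∑ i ∈ Finset.range (n / d - 1),
          ∑ j ∈ Finset.Ico (i + 1) (n / d),
          (-1 : AlgebraicClosure (ZMod p)) ^ i * δ ^ p ^ (k * j) * a ^ p ^ (k * i)) →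
        x₀ ∈ Ffield p n ∧ Smap p l k x₀ = a) :=
  stmt17_general p n k l hn hlk hkl d L hd hL hnd hpk a ha
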